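/- arXiv:2107.00253 — 5 statements merged into one kernel-verified Lean document; each statement's English description precedes it below -/
import Mathlib

section
/- Let G be a finite group and H1, H2 subgroups of G. Then the following are equivalent: (a) for every g ∈ G, the number of left cosets of H1 in G fixed by g under left multiplication equals the number of left cosets of H2 in G fixed by g; (b) for every g ∈ G, the cardinality of {h ∈ H1 : h is conjugate to g in G} equals the cardinality of {h ∈ H2 : h is conjugate to g in G}. -/
open Subgroup

section Aux

set_option linter.unusedSectionVars false

variable {G : Type*} [Group G] [Fintype G]

private lemma fix_iff (H : Subgroup G) (g x : G) :
    g • (QuotientGroup.mk x : G ⧸ H) = QuotientGroup.mk x ↔ x⁻¹ * g * x ∈ H := by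
  rw [show g • (QuotientGroup.mk x : G ⧸ H) = QuotientGroup.mk (g * x) from rfl,
    QuotientGroup.eq]
  constructor
  · intro h
    have := H.inv_mem h
    simpa [mul_assoc] using this
  · intro h
    have := H.inv_mem h
    simpa [mul_assoc] using this

private lemma central_conj {g z : G} (hz : z ∈ Subgroup.centralizer {g}) (c : G) :
    (z * c)⁻¹ * g * (z * c) = c⁻¹ * g * c := by
  have hz' : g * z = z * g := Subgroup.mem_centralizer_iff.1 hz g rfl
  have h1 : z⁻¹ * g * z = g := by
    rw [mul_assoc, hz', ← mul_assoc, inv_mul_cancel, one_mul]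
  calc (z * c)⁻¹ * g * (z * c) = c⁻¹ * (z⁻¹ * g * z) * c := by group
  _ = c⁻¹ * g * c := by rw [h1]

private noncomputable def midEquiv1 (H : Subgroup G) (g : G) :
    {x : G ⧸ H // g • x = x} × H ≃ {x : G // x⁻¹ * g * x ∈ H} := by
  classical
  refine Equiv.ofBijective (fun p => ⟨p.1.1.out * p.2, ?_⟩) ⟨?_, ?_⟩
  · obtain ⟨⟨q, hq⟩, h⟩ := p
    have hy : q.out⁻¹ * g * q.out ∈ H := by
      rw [← fix_iff, QuotientGroup.out_eq']; exact hq
    have : (q.out * (h : G))⁻¹ * g * (q.out * h) =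
        (h : G)⁻¹ * (q.out⁻¹ * g * q.out) * h := by group
    rw [this]
    exact H.mul_mem (H.mul_mem (H.inv_mem h.2) hy) h.2
  · rintro ⟨⟨q1, hq1⟩, h1⟩ ⟨⟨q2, hq2⟩, h2⟩ heq
    simp only [Subtype.mk_eq_mk] at heq
    have hqq : q1 = q2 := by
      have : (QuotientGroup.mk (q1.out * (h1 : G)) : G ⧸ H) =
          QuotientGroup.mk (q2.out * (h2 : G)) := by rw [heq]
      rw [QuotientGroup.mk_mul_of_mem _ h1.2, QuotientGroup.mk_mul_of_mem _ h2.2,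
        QuotientGroup.out_eq', QuotientGroup.out_eq'] at this
      exact this
    subst hqq
    have : (h1 : G) = h2 := mul_left_cancel heq
    simp [Subtype.ext this]
  · rintro ⟨x, hx⟩
    have hq : g • (QuotientGroup.mk x : G ⧸ H) = QuotientGroup.mk x := (fix_iff H g x).2 hx
    have hmem : ((QuotientGroup.mk x : G ⧸ H).out)⁻¹ * x ∈ H := by
      rw [← QuotientGroup.eq, QuotientGroup.out_eq']
    exact ⟨⟨⟨QuotientGroup.mk x, hq⟩, ⟨_, hmem⟩⟩, by simp⟩

private noncomputable def midEquiv2 (H : Subgroup G) (g : G) :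
    {h : H // IsConj (h : G) g} × (Subgroup.centralizer {g} : Subgroup G) ≃
      {x : G // x⁻¹ * g * x ∈ H} := by
  classical
  have hc : ∀ p : {h : H // IsConj (h : G) g}, ∃ c : G, c⁻¹ * g * c = p.1 := by
    intro p
    obtain ⟨c, hc⟩ := isConj_iff.1 p.2
    have h2 : c⁻¹ * (c * (p.1 : G) * c⁻¹) * c = (p.1 : G) := by group
    rw [hc] at h2
    exact ⟨c, h2⟩
  choose c hcspec using hc
  refine Equiv.ofBijective (fun p => ⟨p.2 * c p.1, ?_⟩) ⟨?_, ?_⟩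
  · obtain ⟨p, z⟩ := p
    rw [central_conj z.2, hcspec p]
    exact p.1.2
  · rintro ⟨p1, z1⟩ ⟨p2, z2⟩ heq
    simp only [Subtype.mk_eq_mk] at heq
    have hp : p1 = p2 := by
      have e1 : ((z1 : G) * c p1)⁻¹ * g * ((z1 : G) * c p1) = (p1.1 : G) := by
        rw [central_conj z1.2, hcspec p1]
      have e2 : ((z2 : G) * c p2)⁻¹ * g * ((z2 : G) * c p2) = (p2.1 : G) := by
        rw [central_conj z2.2, hcspec p2]
      rw [heq, e2] at e1
      exact Subtype.ext (Subtype.ext e1.symm)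
    subst hp
    have : (z1 : G) = z2 := mul_right_cancel heq
    simp [Subtype.ext this]
  · rintro ⟨x, hx⟩
    set p : {h : H // IsConj (h : G) g} := ⟨⟨x⁻¹ * g * x, hx⟩, isConj_iff.2 ⟨x, by group⟩⟩ with hp
    refine ⟨⟨p, ⟨x * (c p)⁻¹, ?_⟩⟩, ?_⟩
    · rw [Subgroup.mem_centralizer_iff]
      rintro m rfl
      have h1 : (c p)⁻¹ * m * c p = x⁻¹ * m * x := hcspec p
      have : m * (x * (c p)⁻¹) = x * ((x⁻¹ * m * x) * (c p)⁻¹) := by group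
      rw [this, ← h1]
      group
    · simp

private theorem mid_card1 (H : Subgroup G) (g : G) :
    Nat.card {x : G // x⁻¹ * g * x ∈ H} =
      Nat.card {x : G ⧸ H // g • x = x} * Nat.card H := by
  rw [← Nat.card_prod]
  exact (Nat.card_congr (midEquiv1 H g)).symm

private theorem mid_card2 (H : Subgroup G) (g : G) :
    Nat.card {x : G // x⁻¹ * g * x ∈ H} =
      Nat.card {h : H // IsConj (h : G) g} *
        Nat.card (Subgroup.centralizer ({g} : Set G)) := by
  rw [← Nat.card_prod]
  exact (Nat.card_congr (midEquiv2 H g)).symm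

private noncomputable def sumEquiv (H : Subgroup G) :
    (Σ g : G, {x : G // x⁻¹ * g * x ∈ H}) ≃ H × G := by
  classical
  refine Equiv.ofBijective (fun p => (⟨p.2.1⁻¹ * p.1 * p.2.1, p.2.2⟩, p.2.1)) ⟨?_, ?_⟩
  · rintro ⟨g1, x1, hx1⟩ ⟨g2, x2, hx2⟩ heq
    simp only [Prod.mk.injEq, Subtype.mk_eq_mk] at heq
    obtain ⟨h1, h2⟩ := heq
    subst h2
    have : g1 = g2 := by
      have := h1
      simp only [mul_left_inj, mul_right_inj] at this
      exact this
    subst this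
    rfl
  · rintro ⟨⟨h, hh⟩, x⟩
    refine ⟨⟨x * h * x⁻¹, ⟨x, by simpa [mul_assoc] using hh⟩⟩, ?_⟩
    simp only [Prod.mk.injEq, Subtype.mk_eq_mk]
    exact ⟨by group, trivial⟩

private theorem mid_sum (H : Subgroup G) :
    ∑ g : G, Nat.card {x : G // x⁻¹ * g * x ∈ H} = Nat.card H * Nat.card G := by
  classical
  rw [← Nat.card_prod, ← Nat.card_congr (sumEquiv H), Nat.card_eq_fintype_card,
    Fintype.card_sigma]
  simp [Nat.card_eq_fintype_card]

end Aux

theorem stmt_7 {G : Type*} [Group G] [Fintype G] (H1 H2 : Subgroup G) :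
    (∀ g : G, Nat.card {x : G ⧸ H1 // g • x = x} = Nat.card {x : G ⧸ H2 // g • x = x}) ↔
      (∀ g : G, Nat.card {h : H1 // IsConj (h : G) g} = Nat.card {h : H2 // IsConj (h : G) g}) := by
  classical
  have hH1 : 0 < Nat.card H1 := Nat.card_pos
  have hH2 : 0 < Nat.card H2 := Nat.card_pos
  constructor
  · intro hfix
    -- card of quotients equal
    have hq : Nat.card (G ⧸ H1) = Nat.card (G ⧸ H2) := by
      have e1 : Nat.card {x : G ⧸ H1 // (1 : G) • x = x} = Nat.card (G ⧸ H1) :=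
        Nat.card_congr (Equiv.subtypeUnivEquiv fun x => one_smul G x)
      have e2 : Nat.card {x : G ⧸ H2 // (1 : G) • x = x} = Nat.card (G ⧸ H2) :=
        Nat.card_congr (Equiv.subtypeUnivEquiv fun x => one_smul G x)
      rw [← e1, ← e2]
      exact hfix 1
    have hcards : Nat.card H1 = Nat.card H2 := by
      have l1 := Subgroup.card_eq_card_quotient_mul_card_subgroup H1
      have l2 := Subgroup.card_eq_card_quotient_mul_card_subgroup H2
      have hqpos : 0 < Nat.card (G ⧸ H2) := Nat.card_pos
      have key := l1.symm.trans l2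
      rw [hq] at key
      exact Nat.eq_of_mul_eq_mul_left hqpos key
    intro g
    have hcent : 0 < Nat.card (Subgroup.centralizer ({g} : Set G)) := Nat.card_pos
    have e1 := mid_card1 H1 g
    have e2 := mid_card1 H2 g
    have f1 := mid_card2 H1 g
    have f2 := mid_card2 H2 g
    have : Nat.card {h : H1 // IsConj (h : G) g} * Nat.card (Subgroup.centralizer ({g} : Set G))
        = Nat.card {h : H2 // IsConj (h : G) g} * Nat.card (Subgroup.centralizer ({g} : Set G)) := by
      rw [← f1, ← f2, e1, e2, hfix g, hcards]
    exact Nat.eq_of_mul_eq_mul_right hcent this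
  · intro hconj
    have hcards : Nat.card H1 = Nat.card H2 := by
      have s1 := mid_sum H1
      have s2 := mid_sum H2
      have : ∑ g : G, Nat.card {x : G // x⁻¹ * g * x ∈ H1}
          = ∑ g : G, Nat.card {x : G // x⁻¹ * g * x ∈ H2} := by
        refine Finset.sum_congr rfl fun g _ => ?_
        rw [mid_card2 H1 g, mid_card2 H2 g, hconj g]
      rw [s1, s2] at this
      exact Nat.eq_of_mul_eq_mul_right (Nat.card_pos) this
    intro g
    have : Nat.card {x : G ⧸ H1 // g • x = x} * Nat.card H1
        = Nat.card {x : G ⧸ H2 // g • x = x} * Nat.card H1 := by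
      rw [← mid_card1 H1 g, hcards, ← mid_card1 H2 g, mid_card2 H1 g, mid_card2 H2 g, hconj g]
    exact Nat.eq_of_mul_eq_mul_right hH1 this
end

section
/- Let G be a finite group, H1, H2 ≤ G subgroups, and χ1 : H1 → ℂˣ, χ2 : H2 → ℂˣ group homomorphisms. Suppose the induced class functions Ind_{H1}^G χ1 and Ind_{H2}^G χ2 are equal as functions on G. Then Ind_{H1}^G φ1 = Ind_{H2}^G φ2 as functions on G, where φ_i : H_i → ℂ is defined by φ_i(h) = conj(χ_i(h)) · (Ind_{H_i}^G χ_i)(h), i.e., the product of the complex conjugate of χ_i with the restriction to H_i of the induced class function of χ_i. -/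
open scoped Classical in
/-- The class function induced from a function `φ` on a subgroup `H` of `G`:
`Ind_H^G φ (g) = (1/|H|) · Σ_{x ∈ G, x⁻¹gx ∈ H} φ(x⁻¹gx)`. -/
noncomputable def inducedFun {G : Type*} [Group G] (H : Subgroup G) (φ : H → ℂ) : G → ℂ :=
  fun g => (1 / (Nat.card H : ℂ)) *
    ∑ᶠ x : G, if h : x⁻¹ * g * x ∈ H then φ ⟨x⁻¹ * g * x, h⟩ else 0

open scoped Classical in
lemma inducedFun_conjInv {G : Type*} [Group G] [Fintype G] (H : Subgroup G)
    (φ : H → ℂ) (y g : G) : inducedFun H φ (y⁻¹ * g * y) = inducedFun H φ g := by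
  unfold inducedFun
  congr 1
  rw [finsum_eq_sum_of_fintype, finsum_eq_sum_of_fintype]
  refine (Fintype.sum_equiv (Equiv.mulLeft y⁻¹)
    (fun x => if h : x⁻¹ * g * x ∈ H then φ ⟨x⁻¹ * g * x, h⟩ else 0)
    (fun x => if h : x⁻¹ * (y⁻¹ * g * y) * x ∈ H then φ ⟨x⁻¹ * (y⁻¹ * g * y) * x, h⟩ else 0)
    (fun x => ?_)).symm
  have hx : (y⁻¹ * x)⁻¹ * (y⁻¹ * g * y) * (y⁻¹ * x) = x⁻¹ * g * x := by group
  simp only [Equiv.coe_mulLeft, hx]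

open scoped Classical in
lemma inducedFun_key {G : Type*} [Group G] [Fintype G] (H : Subgroup G)
    (χ : H →* ℂˣ) (g : G) :
    inducedFun H
        (fun h => (starRingEnd ℂ) (χ h) * inducedFun H (fun h' => (χ h' : ℂ)) (h : G)) g
      = (starRingEnd ℂ) (inducedFun H (fun h' => (χ h' : ℂ)) g)
        * inducedFun H (fun h' => (χ h' : ℂ)) g := by
  set F := inducedFun H (fun h' => (χ h' : ℂ)) with hF
  show (1 / (Nat.card H : ℂ)) *
    ∑ᶠ x : G, (if h : x⁻¹ * g * x ∈ H then (starRingEnd ℂ) (χ ⟨x⁻¹ * g * x, h⟩) * F (x⁻¹ * g * x) else 0)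
      = (starRingEnd ℂ) ((1 / (Nat.card H : ℂ)) *
          ∑ᶠ x : G, (if h : x⁻¹ * g * x ∈ H then (χ ⟨x⁻¹ * g * x, h⟩ : ℂ) else 0)) * F g
  have hterm : ∀ x : G,
      (if h : x⁻¹ * g * x ∈ H then (starRingEnd ℂ) (χ ⟨x⁻¹ * g * x, h⟩) * F (x⁻¹ * g * x) else 0)
      = (if h : x⁻¹ * g * x ∈ H then (starRingEnd ℂ) (χ ⟨x⁻¹ * g * x, h⟩) else 0) * F g := by
    intro x
    by_cases h : x⁻¹ * g * x ∈ H
    · simp only [dif_pos h]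
      rw [hF, inducedFun_conjInv]
    · simp [dif_neg h]
  rw [finsum_eq_sum_of_fintype, finsum_eq_sum_of_fintype]
  simp only [hterm]
  rw [← Finset.sum_mul, map_mul, map_sum]
  simp only [apply_dite (starRingEnd ℂ), map_zero]
  rw [map_div₀, map_one, map_natCast]
  ring

theorem stmt_10 {G : Type*} [Group G] [Finite G] (H1 H2 : Subgroup G)
    (χ1 : H1 →* ℂˣ) (χ2 : H2 →* ℂˣ)
    (hEq : inducedFun H1 (fun h => (χ1 h : ℂ)) = inducedFun H2 (fun h => (χ2 h : ℂ))) :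
    inducedFun H1
        (fun h => (starRingEnd ℂ) (χ1 h) * inducedFun H1 (fun h' => (χ1 h' : ℂ)) (h : G))
      = inducedFun H2
        (fun h => (starRingEnd ℂ) (χ2 h) * inducedFun H2 (fun h' => (χ2 h' : ℂ)) (h : G)) := by
  have : Fintype G := Fintype.ofFinite G
  funext g
  rw [inducedFun_key, inducedFun_key, hEq]
end

section
/- Let ℓ ≥ 3 be a prime, G a finite group, and H₁ ≤ G a subgroup; form the wreath product G̃ = (Ω → ZMod ℓ) ⋊ G over Ω = G/H₁, the subgroup H̃₁, and the character Ξ : H̃₁ → ℂˣ as in the context. Let V = {F : G̃ → ℂ | F(η · x) = Ξ(η) · F(x) for all η ∈ H̃₁ and x ∈ G̃}, a ℂ-subspace of the functions G̃ → ℂ, with G̃ acting ℂ-linearly on V by (x̃ · F)(y) = F(y · x̃). For each right coset H̃₁x of H̃₁ in G̃, let L_{H̃₁x} = {F ∈ V : F vanishes outside H̃₁x}; each L_{H̃₁x} is a one-dimensional subspace and V is the internal direct sum of these lines. Then: if L is any finite set of one-dimensional ℂ-subspaces of V such that V is the internal direct sum of the members of L and for every x̃ ∈ G̃ and every Λ ∈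 L the image x̃ · Λ again belongs to L, then L = {L_{H̃₁x} : x ∈ G̃}. (In other words, the induced representation of Ξ has a unique monomial structure, so Ξ is G̃-solitary.) -/
/-- The action of `H` on `Multiplicative (Ω → ZMod ℓ)` permuting coordinates:
`(g • f)(x) = f(g⁻¹ • x)`. -/
def wreathAct {H : Type*} [Group H] (Ω : Type*) [MulAction H Ω] (ℓ : ℕ) :
    H →* MulAut (Multiplicative (Ω → ZMod ℓ)) where
  toFun g :=
    { toFun := fun f => Multiplicative.ofAdd fun x => Multiplicative.toAdd f (g⁻¹ • x)
      invFun := fun f => Multiplicative.ofAdd fun x => Multiplicative.toAdd f (g • x)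
      left_inv := fun f => by
        show Multiplicative.ofAdd (fun x => Multiplicative.toAdd f (g⁻¹ • g • x)) = f
        simp
      right_inv := fun f => by
        show Multiplicative.ofAdd (fun x => Multiplicative.toAdd f (g • g⁻¹ • x)) = f
        simp
      map_mul' := fun f f' => rfl }
  map_one' := by
    apply MulEquiv.ext
    intro f
    show Multiplicative.ofAdd (fun x => Multiplicative.toAdd f ((1:H)⁻¹ • x)) = f
    simp
  map_mul' := fun a b => by
    apply MulEquiv.ext
    intro f
    show Multiplicative.ofAdd (fun x => Multiplicative.toAdd f ((a * b)⁻¹ • x))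
      = Multiplicative.ofAdd (fun x => Multiplicative.toAdd f (b⁻¹ • a⁻¹ • x))
    simp [mul_smul]

/-- The wreath product `G̃ = (G/H₁ → ZMod ℓ) ⋊ G`, where `G` permutes the
coordinates as it permutes the left cosets of `H₁`. -/
abbrev WreathG (G : Type*) [Group G] (H₁ : Subgroup G) (ℓ : ℕ) :=
  Multiplicative ((G ⧸ H₁) → ZMod ℓ) ⋊[wreathAct (G ⧸ H₁) ℓ] G

/-- The subgroup `H̃ = (G/H₁ → ZMod ℓ) ⋊ H` of the wreath product `G̃`. -/
def tildeSub {G : Type*} [Group G] (H₁ : Subgroup G) (ℓ : ℕ) (H : Subgroup G) :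
    Subgroup (WreathG G H₁ ℓ) :=
  H.comap SemidirectProduct.rightHom

/-- The space `V` of `Ξ`-equivariant functions `F : G̃ → ℂ` (i.e. satisfying
`F(η·x) = Ξ(η)·F(x)` for `η ∈ H̃₁`), realizing the induced representation
`Ind_{H̃₁}^{G̃} Ξ`. -/
noncomputable def equivariantSubspace {G : Type*} [Group G] (H₁ : Subgroup G) (ℓ : ℕ)
    (Ξ : tildeSub H₁ ℓ H₁ →* ℂˣ) : Submodule ℂ (WreathG G H₁ ℓ → ℂ) where
  carrier := {F | ∀ (η : tildeSub H₁ ℓ H₁) (x : WreathG G H₁ ℓ),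
    F (↑η * x) = (Ξ η : ℂ) * F x}
  add_mem' := by
    intro F F' hF hF' η x
    simp only [Pi.add_apply, hF η x, hF' η x]
    ring
  zero_mem' := by
    intro η x
    simp
  smul_mem' := by
    intro c F hF η x
    simp only [Pi.smul_apply, smul_eq_mul, hF η x]
    ring

/-- The line `L_{H̃₁x} ⊆ V` of equivariant functions supported on the right
coset `H̃₁ · x`. -/
noncomputable def stdLine {G : Type*} [Group G] (H₁ : Subgroup G) (ℓ : ℕ)
    (Ξ : tildeSub H₁ ℓ H₁ →* ℂˣ) (x : WreathG G H₁ ℓ) :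
    Submodule ℂ ↥(equivariantSubspace H₁ ℓ Ξ) where
  carrier := {F | ∀ y : WreathG G H₁ ℓ, (∀ η : tildeSub H₁ ℓ H₁, y ≠ ↑η * x) →
    (F : WreathG G H₁ ℓ → ℂ) y = 0}
  add_mem' := by
    intro F F' hF hF' y hy
    simp only [Submodule.coe_add, Pi.add_apply, hF y hy, hF' y hy, add_zero]
  zero_mem' := by
    intro y hy
    rfl
  smul_mem' := by
    intro c F hF y hy
    simp only [SetLike.val_smul, Pi.smul_apply, hF y hy, smul_zero]

/-- The (right-translation) action of `z ∈ G̃` on the induced representation `V`: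
`(z · F)(y) = F(y·z)`. -/
noncomputable def actMap {G : Type*} [Group G] (H₁ : Subgroup G) (ℓ : ℕ)
    (Ξ : tildeSub H₁ ℓ H₁ →* ℂˣ) (z : WreathG G H₁ ℓ) :
    ↥(equivariantSubspace H₁ ℓ Ξ) →ₗ[ℂ] ↥(equivariantSubspace H₁ ℓ Ξ) where
  toFun F := ⟨fun y => (F : WreathG G H₁ ℓ → ℂ) (y * z), fun η y => by
    show (F : WreathG G H₁ ℓ → ℂ) (↑η * y * z)
      = (Ξ η : ℂ) * (F : WreathG G H₁ ℓ → ℂ) (y * z)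
    rw [mul_assoc]
    exact F.2 η (y * z)⟩
  map_add' := fun F F' => rfl
  map_smul' := fun c F => rfl

section Aux

open SemidirectProduct Complex
open scoped Classical

variable {G : Type*} [Group G] (H₁ : Subgroup G) (ℓ : ℕ)

/-- The "slice" of an element of the wreath product: the coset `↑(g⁻¹) ∈ G ⧸ H₁`
attached to `y = (f, g)`. -/
def ωm (y : WreathG G H₁ ℓ) : G ⧸ H₁ := QuotientGroup.mk y.right⁻¹

lemma mem_tilde {z : WreathG G H₁ ℓ} : z ∈ tildeSub H₁ ℓ H₁ ↔ z.right ∈ H₁ := Iff.rfl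

lemma ωm_eq_iff {y x : WreathG G H₁ ℓ} :
    ωm H₁ ℓ y = ωm H₁ ℓ x ↔ y * x⁻¹ ∈ tildeSub H₁ ℓ H₁ := by
  rw [ωm, ωm, QuotientGroup.eq, mem_tilde, mul_right, inv_right, inv_inv]

lemma ωm_coset_mul (η : tildeSub H₁ ℓ H₁) (y : WreathG G H₁ ℓ) :
    ωm H₁ ℓ (↑η * y) = ωm H₁ ℓ y := by
  rw [ωm, ωm, QuotientGroup.eq, mul_right, inv_inv, mul_inv_cancel_right]
  exact η.2

variable {Ξ : tildeSub H₁ ℓ H₁ →* ℂˣ}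

lemma memV_iff {F : WreathG G H₁ ℓ → ℂ} :
    F ∈ equivariantSubspace H₁ ℓ Ξ ↔ ∀ (η : tildeSub H₁ ℓ H₁) (x : WreathG G H₁ ℓ),
      F (↑η * x) = (Ξ η : ℂ) * F x := Iff.rfl

lemma mem_stdLine_iff {x : WreathG G H₁ ℓ} {F : ↥(equivariantSubspace H₁ ℓ Ξ)} :
    F ∈ stdLine H₁ ℓ Ξ x ↔
      ∀ y, ωm H₁ ℓ y ≠ ωm H₁ ℓ x → (F : WreathG G H₁ ℓ → ℂ) y = 0 := by
  constructor
  · intro h y hy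
    refine h y fun η hη => hy ?_
    rw [hη, ωm_coset_mul]
  · intro h y hy
    by_cases hc : ωm H₁ ℓ y = ωm H₁ ℓ x
    · exact absurd (inv_mul_cancel_right y x).symm (hy ⟨y * x⁻¹, (ωm_eq_iff H₁ ℓ).1 hc⟩)
    · exact h y hc

lemma stdLine_congr {x x' : WreathG G H₁ ℓ} (h : ωm H₁ ℓ x' = ωm H₁ ℓ x) :
    stdLine H₁ ℓ Ξ x' = stdLine H₁ ℓ Ξ x := by
  ext F
  rw [mem_stdLine_iff, mem_stdLine_iff, h]

/-- The key diagonality property: right translation by an element of the base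
group `(G⧸H₁ → ZMod ℓ)` acts on `V` diagonally, multiplying the value at `y` by
a root of unity depending only on the slice `ωm y`. -/
lemma diag (hΞ : ∀ w : tildeSub H₁ ℓ H₁,
      (Ξ w : ℂ) = Complex.exp (2 * Real.pi * Complex.I *
        ((Multiplicative.toAdd (w : WreathG G H₁ ℓ).left (QuotientGroup.mk (1 : G))).val : ℂ)
          / ℓ))
    (F : ↥(equivariantSubspace H₁ ℓ Ξ)) (a : (G ⧸ H₁) → ZMod ℓ) (y : WreathG G H₁ ℓ) :
    (F : WreathG G H₁ ℓ → ℂ) (y * inl (Multiplicative.ofAdd a)) =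
      Complex.exp (2 * Real.pi * Complex.I * ((a (ωm H₁ ℓ y)).val : ℂ) / ℓ) *
        (F : WreathG G H₁ ℓ → ℂ) y := by
  set b : Multiplicative ((G ⧸ H₁) → ZMod ℓ) :=
    Multiplicative.ofAdd (fun x => a (y.right⁻¹ • x)) with hb
  have hact : (wreathAct (G ⧸ H₁) ℓ y.right) (Multiplicative.ofAdd a) = b := rfl
  have hsplit : y * inl (Multiplicative.ofAdd a) = (inl b) * y := by
    ext
    · rw [mul_left, mul_left, left_inl, left_inl, right_inl, map_one, MulAut.one_apply,
        hact, mul_comm]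
    · rw [mul_right, mul_right, right_inl, right_inl, mul_one, one_mul]
  have hmem : inl b ∈ tildeSub H₁ ℓ H₁ := by
    rw [mem_tilde, right_inl]; exact Subgroup.one_mem _
  have heq := F.2 (⟨inl b, hmem⟩ : tildeSub H₁ ℓ H₁) y
  have h2 : y.right⁻¹ • (QuotientGroup.mk (1 : G) : G ⧸ H₁) = ωm H₁ ℓ y := by
    rw [ωm]
    show y.right⁻¹ • ((1 : G) : G ⧸ H₁) = _
    rw [MulAction.Quotient.smul_mk, smul_eq_mul, mul_one]
  have hval : (Multiplicative.toAdd
      ((⟨inl b, hmem⟩ : tildeSub H₁ ℓ H₁) : WreathG G H₁ ℓ).left (QuotientGroup.mk (1 : G)))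
      = a (ωm H₁ ℓ y) := by
    show a (y.right⁻¹ • (QuotientGroup.mk (1 : G) : G ⧸ H₁)) = a (ωm H₁ ℓ y)
    rw [h2]
  rw [hsplit, heq, hΞ ⟨inl b, hmem⟩, hval]


lemma actMap_inl_apply (hΞ : ∀ w : tildeSub H₁ ℓ H₁,
      (Ξ w : ℂ) = Complex.exp (2 * Real.pi * Complex.I *
        ((Multiplicative.toAdd (w : WreathG G H₁ ℓ).left (QuotientGroup.mk (1 : G))).val : ℂ)
          / ℓ))
    (F : ↥(equivariantSubspace H₁ ℓ Ξ)) (a : (G ⧸ H₁) → ZMod ℓ) (y : WreathG G H₁ ℓ) :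
    ((actMap H₁ ℓ Ξ (inl (Multiplicative.ofAdd a)) F :
        ↥(equivariantSubspace H₁ ℓ Ξ)) : WreathG G H₁ ℓ → ℂ) y
      = Complex.exp (2 * Real.pi * Complex.I * ((a (ωm H₁ ℓ y)).val : ℂ) / ℓ) *
        (F : WreathG G H₁ ℓ → ℂ) y :=
  diag H₁ ℓ hΞ F a y

set_option maxHeartbeats 1000000 in
/-- The standard nonzero element of the line `stdLine x`. -/
noncomputable def Fstd (Ξ : tildeSub H₁ ℓ H₁ →* ℂˣ) (x : WreathG G H₁ ℓ) :
    ↥(equivariantSubspace H₁ ℓ Ξ) :=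
  ⟨fun y => if h : y * x⁻¹ ∈ tildeSub H₁ ℓ H₁ then ((Ξ ⟨y * x⁻¹, h⟩ : ℂˣ) : ℂ) else 0, by
    intro η y
    beta_reduce
    have key : (↑η * y) * x⁻¹ = ↑η * (y * x⁻¹) := mul_assoc _ _ _
    by_cases h : y * x⁻¹ ∈ tildeSub H₁ ℓ H₁
    · have h2 : (↑η * y) * x⁻¹ ∈ tildeSub H₁ ℓ H₁ := by
        rw [key]; exact Subgroup.mul_mem _ η.2 h
      rw [dif_pos h, dif_pos h2]
      have h3 : (⟨(↑η * y) * x⁻¹, h2⟩ : tildeSub H₁ ℓ H₁) = η * ⟨y * x⁻¹, h⟩ :=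
        Subtype.ext key
      rw [h3, map_mul, Units.val_mul]
    · have h2 : ¬((↑η * y) * x⁻¹ ∈ tildeSub H₁ ℓ H₁) := by
        rw [key]
        exact fun hh => h ((Subgroup.mul_mem_cancel_left _ η.2).1 hh)
      rw [dif_neg h, dif_neg h2, mul_zero]⟩

lemma Fstd_apply_self (Ξ : tildeSub H₁ ℓ H₁ →* ℂˣ) (x : WreathG G H₁ ℓ) :
    (Fstd H₁ ℓ Ξ x : WreathG G H₁ ℓ → ℂ) x = 1 := by
  have h : x * x⁻¹ ∈ tildeSub H₁ ℓ H₁ := by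
    rw [mul_inv_cancel]; exact Subgroup.one_mem _
  show (if h : x * x⁻¹ ∈ tildeSub H₁ ℓ H₁ then ((Ξ ⟨x * x⁻¹, h⟩ : ℂˣ) : ℂ) else 0) = 1
  rw [dif_pos h]
  have h2 : (⟨x * x⁻¹, h⟩ : tildeSub H₁ ℓ H₁) = 1 := Subtype.ext (mul_inv_cancel x)
  rw [h2, map_one, Units.val_one]

lemma Fstd_mem_stdLine (Ξ : tildeSub H₁ ℓ H₁ →* ℂˣ) (x : WreathG G H₁ ℓ) :
    Fstd H₁ ℓ Ξ x ∈ stdLine H₁ ℓ Ξ x := by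
  rw [mem_stdLine_iff]
  intro y hy
  have h : ¬(y * x⁻¹ ∈ tildeSub H₁ ℓ H₁) := fun hh => hy ((ωm_eq_iff H₁ ℓ).2 hh)
  show (if h : y * x⁻¹ ∈ tildeSub H₁ ℓ H₁ then ((Ξ ⟨y * x⁻¹, h⟩ : ℂˣ) : ℂ) else 0) = 0
  rw [dif_neg h]

lemma stdLine_finrank_le [Finite (WreathG G H₁ ℓ)] (Ξ : tildeSub H₁ ℓ H₁ →* ℂˣ)
    (x : WreathG G H₁ ℓ) : Module.finrank ℂ ↥(stdLine H₁ ℓ Ξ x) ≤ 1 := by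
  haveI := Fintype.ofFinite (WreathG G H₁ ℓ)
  let ev : ↥(stdLine H₁ ℓ Ξ x) →ₗ[ℂ] ℂ :=
    { toFun := fun F => ((F : ↥(equivariantSubspace H₁ ℓ Ξ)) : WreathG G H₁ ℓ → ℂ) x
      map_add' := fun F F' => rfl
      map_smul' := fun c F => rfl }
  have hinj : Function.Injective ev := by
    intro F F' h
    have hd : ∀ y, ((F : ↥(equivariantSubspace H₁ ℓ Ξ)) : WreathG G H₁ ℓ → ℂ) y
        = ((F' : ↥(equivariantSubspace H₁ ℓ Ξ)) : WreathG G H₁ ℓ → ℂ) y := by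
      intro y
      by_cases hc : ωm H₁ ℓ y = ωm H₁ ℓ x
      · have hη : y * x⁻¹ ∈ tildeSub H₁ ℓ H₁ := (ωm_eq_iff H₁ ℓ).1 hc
        have hy : y = ↑(⟨y * x⁻¹, hη⟩ : tildeSub H₁ ℓ H₁) * x :=
          (inv_mul_cancel_right y x).symm
        rw [hy, (F : ↥(equivariantSubspace H₁ ℓ Ξ)).2 ⟨y * x⁻¹, hη⟩ x,
          (F' : ↥(equivariantSubspace H₁ ℓ Ξ)).2 ⟨y * x⁻¹, hη⟩ x]
        exact congrArg _ h
      · rw [(mem_stdLine_iff H₁ ℓ).1 F.2 y hc, (mem_stdLine_iff H₁ ℓ).1 F'.2 y hc]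
    exact Subtype.ext (Subtype.ext (funext hd))
  calc Module.finrank ℂ ↥(stdLine H₁ ℓ Ξ x)
      ≤ Module.finrank ℂ ℂ := LinearMap.finrank_le_finrank_of_injective hinj
    _ = 1 := Module.finrank_self ℂ

/-- Distinctness of the relevant roots of unity. -/
lemma Einj {ℓ : ℕ} (hl : 0 < ℓ) {j k : ℕ} (hj : j < ℓ) (hk : k < ℓ)
    (h : Complex.exp (2 * Real.pi * Complex.I * (j : ℂ) / ℓ)
       = Complex.exp (2 * Real.pi * Complex.I * (k : ℂ) / ℓ)) : j = k := by
  rw [Complex.exp_eq_exp_iff_exists_int] at h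
  obtain ⟨n, hn⟩ := h
  have hl0 : (ℓ : ℂ) ≠ 0 := Nat.cast_ne_zero.2 hl.ne'
  have hpi : (2 * (Real.pi : ℂ) * Complex.I) ≠ 0 :=
    mul_ne_zero (mul_ne_zero two_ne_zero (Complex.ofReal_ne_zero.2 Real.pi_ne_zero))
      Complex.I_ne_zero
  have h3 : (2 * (Real.pi : ℂ) * Complex.I) * (j : ℂ)
      = (2 * (Real.pi : ℂ) * Complex.I) * ((k : ℂ) + n * ℓ) := by
    field_simp at hn
    ring_nf at hn ⊢
    linear_combination (2 * (Real.pi : ℂ) * Complex.I) * hn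
  have key : (j : ℂ) = (k : ℂ) + n * ℓ := mul_left_cancel₀ hpi h3
  have keyz : (j : ℤ) = (k : ℤ) + n * ℓ := by exact_mod_cast key
  have hjz : (j : ℤ) < ℓ := by exact_mod_cast hj
  have hkz : (k : ℤ) < ℓ := by exact_mod_cast hk
  have hj0 : (0 : ℤ) ≤ j := Int.natCast_nonneg j
  have hk0 : (0 : ℤ) ≤ k := Int.natCast_nonneg k
  have hlz : (0 : ℤ) < ℓ := by exact_mod_cast hl
  have hn0 : n = 0 := by
    rcases lt_trichotomy n 0 with hc | hc | hc
    · have h1 : n ≤ -1 := by omega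
      have h2 : n * (ℓ : ℤ) ≤ -1 * ℓ := mul_le_mul_of_nonneg_right h1 (le_of_lt hlz)
      linarith
    · exact hc
    · have h1 : (1 : ℤ) ≤ n := by omega
      have h2 : (1 : ℤ) * ℓ ≤ n * ℓ := mul_le_mul_of_nonneg_right h1 (le_of_lt hlz)
      linarith
  have : (j : ℤ) = k := by rw [keyz, hn0]; ring
  exact_mod_cast this

end Aux

theorem stmt_11 {G : Type*} [Group G] [Finite G] (ℓ : ℕ) (hℓ : ℓ.Prime) (h3 : 3 ≤ ℓ)
    (H₁ : Subgroup G)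
    (Ξ : tildeSub H₁ ℓ H₁ →* ℂˣ)
    (hΞ : ∀ w : tildeSub H₁ ℓ H₁,
      (Ξ w : ℂ) = Complex.exp (2 * Real.pi * Complex.I *
        ((Multiplicative.toAdd (w : WreathG G H₁ ℓ).left (QuotientGroup.mk (1 : G))).val : ℂ)
          / ℓ))
    (L : Set (Submodule ℂ ↥(equivariantSubspace H₁ ℓ Ξ)))
    (hfin : L.Finite)
    (hdim : ∀ Λ ∈ L, Module.finrank ℂ ↥Λ = 1)
    (hind : sSupIndep L)
    (hsup : sSup L = ⊤)
    (hstab : ∀ (z : WreathG G H₁ ℓ), ∀ Λ ∈ L, Submodule.map (actMap H₁ ℓ Ξ z) Λ ∈ L) :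
    L = Set.range (stdLine H₁ ℓ Ξ) := by
  classical
  haveI hNZ : NeZero ℓ := ⟨by omega⟩
  haveI : Finite (WreathG G H₁ ℓ) :=
    Finite.of_injective (fun z => (z.left, z.right)) (fun a b h => by
      injection h with h1 h2
      exact SemidirectProduct.ext h1 h2)
  haveI := Fintype.ofFinite (WreathG G H₁ ℓ)
  -- value computations in ZMod ℓ
  have hval1 : (1 : ZMod ℓ).val = 1 := by
    haveI : Fact (1 < ℓ) := ⟨by omega⟩
    exact ZMod.val_one ℓ
  have hval2 : (2 : ZMod ℓ).val = 2 := by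
    rw [show (2 : ZMod ℓ) = ((2 : ℕ) : ZMod ℓ) by push_cast; ring]
    exact ZMod.val_cast_of_lt (by omega)
  -- the roots of unity
  set E1 : ℂ := Complex.exp (2 * Real.pi * Complex.I * ((1 : ℕ) : ℂ) / ℓ) with hE1
  set E2 : ℂ := Complex.exp (2 * Real.pi * Complex.I * ((2 : ℕ) : ℂ) / ℓ) with hE2
  have hE0 : Complex.exp (2 * Real.pi * Complex.I * ((0 : ℕ) : ℂ) / ℓ) = 1 := by
    simp
  have hE1ne1 : E1 ≠ 1 := by
    rw [hE1, ← hE0]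
    exact fun h => absurd (Einj (by omega) (by omega) (by omega) h) (by omega)
  have hE2ne1 : E2 ≠ 1 := by
    rw [hE2, ← hE0]
    exact fun h => absurd (Einj (by omega) (by omega) (by omega) h) (by omega)
  have hE2ne1' : E2 ≠ E1 := by
    rw [hE2, hE1]
    exact fun h => absurd (Einj (by omega) (by omega) (by omega) h) (by omega)
  have hEmul : E2 = E1 * E1 := by
    rw [hE1, hE2, ← Complex.exp_add]
    congr 1
    push_cast
    ring
  -- the main claim: every member of L is a standard line
  have main : ∀ Λ ∈ L, ∃ x, Λ = stdLine H₁ ℓ Ξ x := by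
    intro Λ hΛ
    have h1 : Module.finrank ℂ ↥Λ = 1 := hdim Λ hΛ
    obtain ⟨F, hF, hF0⟩ : ∃ F, F ∈ Λ ∧ F ≠ 0 := by
      by_contra hcon
      push_neg at hcon
      have hbot : Λ = ⊥ := (Submodule.eq_bot_iff _).2 hcon
      rw [hbot, finrank_bot] at h1
      omega
    have hspan : Submodule.span ℂ {F} = Λ := by
      apply Submodule.eq_of_le_of_finrank_le
      · rw [Submodule.span_singleton_le_iff_mem]; exact hF
      · rw [finrank_span_singleton hF0, h1]
    by_cases hsingle : ∀ y₁ y₂, (F : WreathG G H₁ ℓ → ℂ) y₁ ≠ 0 →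
        (F : WreathG G H₁ ℓ → ℂ) y₂ ≠ 0 → ωm H₁ ℓ y₁ = ωm H₁ ℓ y₂
    · obtain ⟨y₀, hy₀⟩ : ∃ y₀, (F : WreathG G H₁ ℓ → ℂ) y₀ ≠ 0 := by
        by_contra hc
        push_neg at hc
        exact hF0 (Subtype.ext (funext hc))
      refine ⟨y₀, Submodule.eq_of_le_of_finrank_le ?_ ?_⟩
      · rw [← hspan, Submodule.span_singleton_le_iff_mem, mem_stdLine_iff]
        intro y hy
        by_contra hne
        exact hy (hsingle y y₀ hne hy₀)
      · rw [h1]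
        exact stdLine_finrank_le H₁ ℓ Ξ y₀
    · exfalso
      push_neg at hsingle
      obtain ⟨y₁, y₂, hy₁, hy₂, hneq⟩ := hsingle
      set ω₁ := ωm H₁ ℓ y₁ with hω₁
      set a1 : (G ⧸ H₁) → ZMod ℓ := fun ω => if ω = ω₁ then 1 else 0 with ha1
      set a2 : (G ⧸ H₁) → ZMod ℓ := fun ω => if ω = ω₁ then 2 else 0 with ha2
      set z1 : WreathG G H₁ ℓ := SemidirectProduct.inl (Multiplicative.ofAdd a1) with hz1
      set z2 : WreathG G H₁ ℓ := SemidirectProduct.inl (Multiplicative.ofAdd a2) with hz2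
      have hF1 : ∀ y, ((actMap H₁ ℓ Ξ z1 F : ↥(equivariantSubspace H₁ ℓ Ξ)) :
          WreathG G H₁ ℓ → ℂ) y
          = (if ωm H₁ ℓ y = ω₁ then E1 else 1) * (F : WreathG G H₁ ℓ → ℂ) y := by
        intro y
        rw [hz1, actMap_inl_apply H₁ ℓ hΞ F a1 y]
        by_cases hc : ωm H₁ ℓ y = ω₁
        · have hav : a1 (ωm H₁ ℓ y) = 1 := by rw [ha1, hc]; simp
          rw [hav, hval1, if_pos hc, hE1]
        · have hav : a1 (ωm H₁ ℓ y) = 0 := by rw [ha1]; simp [hc]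
          rw [hav, ZMod.val_zero, if_neg hc, hE0]
      have hF2 : ∀ y, ((actMap H₁ ℓ Ξ z2 F : ↥(equivariantSubspace H₁ ℓ Ξ)) :
          WreathG G H₁ ℓ → ℂ) y
          = (if ωm H₁ ℓ y = ω₁ then E2 else 1) * (F : WreathG G H₁ ℓ → ℂ) y := by
        intro y
        rw [hz2, actMap_inl_apply H₁ ℓ hΞ F a2 y]
        by_cases hc : ωm H₁ ℓ y = ω₁
        · have hav : a2 (ωm H₁ ℓ y) = 2 := by rw [ha2, hc]; simp
          rw [hav, hval2, if_pos hc, hE2]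
        · have hav : a2 (ωm H₁ ℓ y) = 0 := by rw [ha2]; simp [hc]
          rw [hav, ZMod.val_zero, if_neg hc, hE0]
      have hω₂ : ωm H₁ ℓ y₂ ≠ ω₁ := fun h => hneq (hω₁ ▸ h.symm)
      have hΛ1 : Submodule.map (actMap H₁ ℓ Ξ z1) Λ ∈ L := hstab z1 Λ hΛ
      have hΛ2 : Submodule.map (actMap H₁ ℓ Ξ z2) Λ ∈ L := hstab z2 Λ hΛ
      have hF1m : actMap H₁ ℓ Ξ z1 F ∈ Submodule.map (actMap H₁ ℓ Ξ z1) Λ :=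
        Submodule.mem_map_of_mem hF
      have hF2m : actMap H₁ ℓ Ξ z2 F ∈ Submodule.map (actMap H₁ ℓ Ξ z2) Λ :=
        Submodule.mem_map_of_mem hF
      have hsp1 : Submodule.map (actMap H₁ ℓ Ξ z1) Λ
          = Submodule.span ℂ {actMap H₁ ℓ Ξ z1 F} := by
        rw [← hspan, Submodule.map_span, Set.image_singleton]
      have hne02 : Λ ≠ Submodule.map (actMap H₁ ℓ Ξ z2) Λ := by
        intro he
        have hmem2 : actMap H₁ ℓ Ξ z2 F ∈ Submodule.span ℂ {F} := by
          rw [hspan, he]; exact hF2m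
        obtain ⟨c, hc⟩ := Submodule.mem_span_singleton.1 hmem2
        have e1 := congrFun (congrArg Subtype.val hc) y₁
        have e2 := congrFun (congrArg Subtype.val hc) y₂
        simp only [Submodule.coe_smul, Pi.smul_apply, smul_eq_mul] at e1 e2
        rw [hF2 y₁, if_pos hω₁.symm] at e1
        rw [hF2 y₂, if_neg hω₂, one_mul] at e2
        have hc1 : c = E2 := mul_right_cancel₀ hy₁ e1
        have hc2 : c = 1 := mul_right_cancel₀ hy₂ (by rw [e2, one_mul])
        exact hE2ne1 (by rw [← hc1, hc2])
      have hne12 : Submodule.map (actMap H₁ ℓ Ξ z1) Λ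
          ≠ Submodule.map (actMap H₁ ℓ Ξ z2) Λ := by
        intro he
        have hmem2 : actMap H₁ ℓ Ξ z2 F ∈ Submodule.span ℂ {actMap H₁ ℓ Ξ z1 F} := by
          rw [← hsp1, he]; exact hF2m
        obtain ⟨c, hc⟩ := Submodule.mem_span_singleton.1 hmem2
        have e1 := congrFun (congrArg Subtype.val hc) y₁
        have e2 := congrFun (congrArg Subtype.val hc) y₂
        simp only [Submodule.coe_smul, Pi.smul_apply, smul_eq_mul] at e1 e2
        rw [hF1 y₁, if_pos hω₁.symm] at e1
        rw [hF1 y₂, if_neg hω₂, one_mul] at e2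
        rw [hF2 y₁, if_pos hω₁.symm] at e1
        rw [hF2 y₂, if_neg hω₂, one_mul] at e2
        have hc1 : c * E1 = E2 := mul_right_cancel₀ hy₁ (by rw [← e1]; ring)
        have hc2 : c = 1 := mul_right_cancel₀ hy₂ (by rw [e2, one_mul])
        rw [hc2, one_mul] at hc1
        exact hE2ne1' hc1.symm
      have hcomb : actMap H₁ ℓ Ξ z2 F
          = (-E1) • F + (E1 + 1) • (actMap H₁ ℓ Ξ z1 F) := by
        apply Subtype.ext
        funext y
        have hy := hF2 y
        rw [show ((((-E1) • F + (E1 + 1) • (actMap H₁ ℓ Ξ z1 F)) :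
            ↥(equivariantSubspace H₁ ℓ Ξ)) : WreathG G H₁ ℓ → ℂ) y
            = (-E1) * (F : WreathG G H₁ ℓ → ℂ) y
              + (E1 + 1) * ((actMap H₁ ℓ Ξ z1 F : ↥(equivariantSubspace H₁ ℓ Ξ)) :
                WreathG G H₁ ℓ → ℂ) y by simp]
        rw [hy, hF1 y]
        by_cases hc : ωm H₁ ℓ y = ω₁
        · rw [if_pos hc, if_pos hc, hEmul]; ring
        · rw [if_neg hc, if_neg hc]; ring
      have hdisj := hind hΛ2
      have hsub : Λ ⊔ Submodule.map (actMap H₁ ℓ Ξ z1) Λ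
          ≤ sSup (L \ {Submodule.map (actMap H₁ ℓ Ξ z2) Λ}) :=
        sup_le (le_sSup ⟨hΛ, hne02⟩) (le_sSup ⟨hΛ1, hne12⟩)
      have hF2sup : actMap H₁ ℓ Ξ z2 F ∈ Λ ⊔ Submodule.map (actMap H₁ ℓ Ξ z1) Λ := by
        rw [hcomb]
        exact Submodule.add_mem _ (Submodule.mem_sup_left (Submodule.smul_mem _ _ hF))
          (Submodule.mem_sup_right (Submodule.smul_mem _ _ hF1m))
      have hzero : actMap H₁ ℓ Ξ z2 F = 0 := by
        have hbot : actMap H₁ ℓ Ξ z2 F ∈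
            (Submodule.map (actMap H₁ ℓ Ξ z2) Λ) ⊓
              sSup (L \ {Submodule.map (actMap H₁ ℓ Ξ z2) Λ}) :=
          Submodule.mem_inf.2 ⟨hF2m, hsub hF2sup⟩
        exact (Submodule.mem_bot ℂ).1 (hdisj.le_bot hbot)
      have := congrFun (congrArg Subtype.val hzero) y₁
      rw [hF2 y₁, if_pos hω₁.symm] at this
      exact hy₁ (by
        rcases mul_eq_zero.1 this with h | h
        · exact absurd h (Complex.exp_ne_zero _)
        · exact h)
  apply Set.eq_of_subset_of_subset
  · intro Λ hΛ
    obtain ⟨x, hx⟩ := main Λ hΛ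
    exact ⟨x, hx.symm⟩
  · rintro Λ' ⟨x, rfl⟩
    by_contra hmem
    let U : Submodule ℂ ↥(equivariantSubspace H₁ ℓ Ξ) :=
      { carrier := {F | ∀ y, ωm H₁ ℓ y = ωm H₁ ℓ x → (F : WreathG G H₁ ℓ → ℂ) y = 0}
        add_mem' := by
          intro F F' hF hF' y hy
          simp only [Submodule.coe_add, Pi.add_apply, hF y hy, hF' y hy, add_zero]
        zero_mem' := by
          intro y hy
          rfl
        smul_mem' := by
          intro c F hF y hy
          simp only [SetLike.val_smul, Pi.smul_apply, hF y hy, smul_zero] }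
    have hLU : ∀ Λ ∈ L, Λ ≤ U := by
      intro Λ hΛ
      obtain ⟨x', rfl⟩ := main Λ hΛ
      have hωne : ωm H₁ ℓ x' ≠ ωm H₁ ℓ x := by
        intro he
        exact hmem (stdLine_congr H₁ ℓ he ▸ hΛ)
      intro F hF y hy
      exact (mem_stdLine_iff H₁ ℓ).1 hF y (by rw [hy]; exact fun h => hωne h.symm)
    have hsupU : (⊤ : Submodule ℂ ↥(equivariantSubspace H₁ ℓ Ξ)) ≤ U := by
      rw [← hsup]
      exact sSup_le hLU
    have h0 : ∀ y, ωm H₁ ℓ y = ωm H₁ ℓ x →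
        (Fstd H₁ ℓ Ξ x : WreathG G H₁ ℓ → ℂ) y = 0 :=
      hsupU (Submodule.mem_top (x := Fstd H₁ ℓ Ξ x))
    have := h0 x rfl
    rw [Fstd_apply_self] at this
    exact one_ne_zero this
end

section
/- Let ℓ be a prime number and H a finite group acting transitively on a finite nonempty set Ω. Form the wreath product W = (Ω → ZMod ℓ) ⋊ H, the semidirect product with multiplication (f, h)·(f′, h′) = (f + h·f′, h h′), where (h·f′)(x) = f′(h⁻¹·x). Then the order of the abelianization of W equals ℓ times the order of the abelianization of H: |W^{ab}| = ℓ · |H^{ab}|. Equivalently, the commutator subgroup of W has order |[H,H]| · ℓ^{|Ω| − 1}. -/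
/-- The wreath product `(Ω → ZMod ℓ) ⋊ H`. -/
abbrev WreathProd (H : Type*) [Group H] (Ω : Type*) [MulAction H Ω] (ℓ : ℕ) :=
  Multiplicative (Ω → ZMod ℓ) ⋊[wreathAct Ω ℓ] H


open SemidirectProduct Multiplicative
open scoped commutatorElement

section aux
variable {H : Type*} [Group H] {Ω : Type*} [Fintype Ω] [MulAction H Ω] {ℓ : ℕ}

def wreathSum (Ω : Type*) [Fintype Ω] (ℓ : ℕ) :
    Multiplicative (Ω → ZMod ℓ) →* Multiplicative (ZMod ℓ) where
  toFun f := Multiplicative.ofAdd (∑ x, Multiplicative.toAdd f x)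
  map_one' := by simp
  map_mul' f g := by
    show Multiplicative.ofAdd (∑ x, (Multiplicative.toAdd f x + Multiplicative.toAdd g x)) = _
    rw [Finset.sum_add_distrib, ofAdd_add]

lemma wreathSum_act (g : H) (f : Multiplicative (Ω → ZMod ℓ)) :
    wreathSum Ω ℓ (wreathAct Ω ℓ g f) = wreathSum Ω ℓ f := by
  show Multiplicative.ofAdd (∑ x, Multiplicative.toAdd f (g⁻¹ • x)) = _
  exact congrArg Multiplicative.ofAdd
    (Fintype.sum_equiv (MulAction.toPerm g⁻¹) _ _ (fun x => rfl))

noncomputable def wreathAb (H : Type*) [Group H] (Ω : Type*) [Fintype Ω] [MulAction H Ω] (ℓ : ℕ) :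
    WreathProd H Ω ℓ →* Multiplicative (ZMod ℓ) × Abelianization H :=
  SemidirectProduct.lift
    ((MonoidHom.inl _ _).comp (wreathSum Ω ℓ))
    ((MonoidHom.inr _ _).comp Abelianization.of)
    (by
      intro g
      ext f <;>
      simp [MulAut.conj_apply, wreathSum_act])

end aux
lemma inl_commutator_inr {N G : Type*} [Group N] [Group G] {φ : G →* MulAut N} (n : N) (g : G) :
    ⁅(SemidirectProduct.inl n : N ⋊[φ] G), (SemidirectProduct.inr g : N ⋊[φ] G)⁆
      = SemidirectProduct.inl (n * φ g n⁻¹) := by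
  have h := SemidirectProduct.inl_aut (φ := φ) g n⁻¹
  rw [commutatorElement_def, map_mul, h, ← map_inv, ← map_inv]
  group

section ker
variable {H : Type*} [Group H] {Ω : Type*} [Fintype Ω] [MulAction H Ω] {ℓ : ℕ}

lemma single_mem_aux (htrans : MulAction.IsPretransitive H Ω) (x y : Ω) :
    haveI := Classical.decEq Ω
    SemidirectProduct.inl (Multiplicative.ofAdd
        (Pi.single x (1 : ZMod ℓ) - Pi.single y (1 : ZMod ℓ)))
      ∈ commutator (WreathProd H Ω ℓ) := by
  classical
  obtain ⟨g, rfl⟩ := htrans.exists_smul_eq x y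
  have key : ⁅(SemidirectProduct.inl (Multiplicative.ofAdd (Pi.single x (1 : ZMod ℓ))) :
      WreathProd H Ω ℓ), (SemidirectProduct.inr g : WreathProd H Ω ℓ)⁆
      = SemidirectProduct.inl (Multiplicative.ofAdd
          (Pi.single x (1 : ZMod ℓ) - Pi.single (g • x) (1 : ZMod ℓ))) := by
    rw [inl_commutator_inr]
    congr 1
    have : (wreathAct Ω ℓ) g (Multiplicative.ofAdd (Pi.single x (1 : ZMod ℓ)))⁻¹
        = Multiplicative.ofAdd (-(Pi.single (g • x) (1 : ZMod ℓ)) : Ω → ZMod ℓ) := by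
      rw [← ofAdd_neg]
      show Multiplicative.ofAdd (fun z => Multiplicative.toAdd
          (Multiplicative.ofAdd (-(Pi.single x (1 : ZMod ℓ)) : Ω → ZMod ℓ)) (g⁻¹ • z)) = _
      congr 1
      funext z
      show -((Pi.single x (1 : ZMod ℓ) : Ω → ZMod ℓ) (g⁻¹ • z))
        = -((Pi.single (g • x) (1 : ZMod ℓ) : Ω → ZMod ℓ) z)
      congr 1
      rw [Pi.single_apply, Pi.single_apply]
      congr 1
      simp [inv_smul_eq_iff]
    rw [this, ← ofAdd_add]
    congr 1
    abel
  rw [← key]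
  exact Subgroup.commutator_mem_commutator (Subgroup.mem_top _) (Subgroup.mem_top _)

lemma inl_mem_commutator (htrans : MulAction.IsPretransitive H Ω) [Nonempty Ω] (hℓ : ℓ.Prime)
    (f : Ω → ZMod ℓ) (hf : ∑ x, f x = 0) :
    SemidirectProduct.inl (Multiplicative.ofAdd f) ∈ commutator (WreathProd H Ω ℓ) := by
  classical
  haveI : NeZero ℓ := ⟨hℓ.ne_zero⟩
  set T : AddSubgroup (Ω → ZMod ℓ) :=
    Subgroup.toAddSubgroup' ((commutator (WreathProd H Ω ℓ)).comap
      (SemidirectProduct.inl : Multiplicative (Ω → ZMod ℓ) →* WreathProd H Ω ℓ)) with hT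
  have hmemT : ∀ g : Ω → ZMod ℓ, g ∈ T ↔
      SemidirectProduct.inl (Multiplicative.ofAdd g) ∈ commutator (WreathProd H Ω ℓ) := by
    intro g; rfl
  rw [← hmemT]
  obtain ⟨x₀⟩ := ‹Nonempty Ω›
  have hgen : ∀ x : Ω, Pi.single x (1 : ZMod ℓ) - Pi.single x₀ (1 : ZMod ℓ) ∈ T := by
    intro x
    rw [hmemT]
    exact single_mem_aux htrans x x₀
  have hrepr : ∑ x, f x • ((Pi.single x 1 - Pi.single x₀ 1 : Ω → ZMod ℓ)) = f := by
    simp only [smul_sub]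
    rw [Finset.sum_sub_distrib, ← Finset.sum_smul, hf, zero_smul, sub_zero]
    have : ∀ x : Ω, f x • (Pi.single x 1 : Ω → ZMod ℓ) = (Pi.single x (f x) : Ω → ZMod ℓ) := by
      intro x
      funext y
      by_cases h : y = x <;> simp [h, Pi.single_apply]
    simp_rw [this]
    exact Finset.univ_sum_single f
  rw [← hrepr]
  refine AddSubgroup.sum_mem T fun x _ => ?_
  have : f x • ((Pi.single x 1 - Pi.single x₀ 1 : Ω → ZMod ℓ))
      = (f x).val • ((Pi.single x 1 - Pi.single x₀ 1 : Ω → ZMod ℓ)) := by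
    rw [← Nat.cast_smul_eq_nsmul (ZMod ℓ), ZMod.natCast_val, ZMod.cast_id]
  rw [this]
  exact AddSubgroup.nsmul_mem T (hgen x) _

end ker

lemma wreathAb_apply {H : Type*} [Group H] {Ω : Type*} [Fintype Ω] [MulAction H Ω] {ℓ : ℕ}
    (w : WreathProd H Ω ℓ) :
    wreathAb H Ω ℓ w = (wreathSum Ω ℓ w.left, Abelianization.of w.right) := by
  show (MonoidHom.inl (Multiplicative (ZMod ℓ)) (Abelianization H)) ((wreathSum Ω ℓ) w.left)
      * (MonoidHom.inr (Multiplicative (ZMod ℓ)) (Abelianization H)) (Abelianization.of w.right) = _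
  ext
  · show wreathSum Ω ℓ w.left * 1 = _; rw [mul_one]; rfl
  · show 1 * Abelianization.of w.right = _; rw [one_mul]

theorem stmt_16 {H : Type*} [Group H] [Fintype H] {Ω : Type*} [Fintype Ω] [Nonempty Ω]
    [MulAction H Ω] (htrans : MulAction.IsPretransitive H Ω)
    (ℓ : ℕ) (hℓ : ℓ.Prime) :
    Nat.card (Abelianization (WreathProd H Ω ℓ)) = ℓ * Nat.card (Abelianization H) ∧
      Nat.card (commutator (WreathProd H Ω ℓ))
        = Nat.card (commutator H) * ℓ ^ (Fintype.card Ω - 1) := by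
  classical
  haveI : NeZero ℓ := ⟨hℓ.ne_zero⟩
  set W := WreathProd H Ω ℓ with hW
  set φ := wreathAb H Ω ℓ with hφ
  -- surjectivity
  have hsurj : Function.Surjective φ := by
    rintro ⟨c, q⟩
    obtain ⟨h, rfl⟩ : ∃ h, Abelianization.of h = q := Quot.exists_rep q
    obtain ⟨x₀⟩ := ‹Nonempty Ω›
    refine ⟨⟨Multiplicative.ofAdd (Pi.single x₀ (Multiplicative.toAdd c)), h⟩, ?_⟩
    rw [hφ, wreathAb_apply]
    ext
    · show Multiplicative.ofAdd (∑ x, Pi.single x₀ (Multiplicative.toAdd c) x) = c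
      rw [Finset.sum_pi_single']
      simp
    · rfl
  -- kernel = commutator
  have hker : φ.ker = commutator W := by
    apply le_antisymm
    · intro w hw
      have hw1 : wreathSum Ω ℓ w.left = 1 ∧ Abelianization.of w.right = 1 := by
        have h1 : φ w = 1 := hw
        rw [hφ, wreathAb_apply] at h1
        exact ⟨congrArg Prod.fst h1, congrArg Prod.snd h1⟩
      rw [← SemidirectProduct.inl_left_mul_inr_right w]
      refine Subgroup.mul_mem _ ?_ ?_
      · have hsum : ∑ x, Multiplicative.toAdd w.left x = 0 := hw1.1
        have := inl_mem_commutator htrans hℓ (Multiplicative.toAdd w.left) hsum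
        simpa using this
      · have hmem : w.right ∈ commutator H := by
          rw [← QuotientGroup.eq_one_iff]
          exact hw1.2
        have hmm : SemidirectProduct.inr w.right ∈
            Subgroup.map (SemidirectProduct.inr : H →* W) (commutator H) :=
          Subgroup.mem_map_of_mem _ hmem
        have hmap : Subgroup.map (SemidirectProduct.inr : H →* W) (commutator H)
            ≤ commutator W := by
          rw [commutator_def, commutator_def, Subgroup.map_commutator]
          exact Subgroup.commutator_mono le_top le_top
        exact hmap hmm
    · exact Abelianization.commutator_subset_ker φ
  -- first part
  have hab : Nat.card (Abelianization W) = ℓ * Nat.card (Abelianization H) := by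
    have e1 : Abelianization W ≃* (Multiplicative (ZMod ℓ) × Abelianization H) :=
      (QuotientGroup.quotientMulEquivOfEq hker.symm).trans
        (QuotientGroup.quotientKerEquivOfSurjective φ hsurj)
    rw [Nat.card_congr e1.toEquiv, Nat.card_prod,
      Nat.card_congr (Multiplicative.toAdd (α := ZMod ℓ)), Nat.card_zmod]
  refine ⟨hab, ?_⟩
  -- cardinalities
  have hcardW : Nat.card W = ℓ ^ Fintype.card Ω * Nat.card H := by
    have e : W ≃ (Ω → ZMod ℓ) × H :=
      ⟨fun w => (Multiplicative.toAdd w.left, w.right),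
       fun p => ⟨Multiplicative.ofAdd p.1, p.2⟩,
       fun w => rfl, fun p => rfl⟩
    rw [Nat.card_congr e, Nat.card_prod, Nat.card_fun, Nat.card_zmod, Nat.card_eq_fintype_card]
  have hLW : Nat.card W = Nat.card (Abelianization W) * Nat.card (commutator W) :=
    Subgroup.card_eq_card_quotient_mul_card_subgroup _
  have hLH : Nat.card H = Nat.card (Abelianization H) * Nat.card (commutator H) :=
    Subgroup.card_eq_card_quotient_mul_card_subgroup _
  have hpos : 0 < ℓ * Nat.card (Abelianization H) :=
    Nat.mul_pos hℓ.pos Nat.card_pos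
  have hn : 1 ≤ Fintype.card Ω := Fintype.card_pos
  apply Nat.eq_of_mul_eq_mul_left hpos
  calc ℓ * Nat.card (Abelianization H) * Nat.card (commutator W)
      = Nat.card (Abelianization W) * Nat.card (commutator W) := by rw [hab]
    _ = Nat.card W := hLW.symm
    _ = ℓ ^ Fintype.card Ω * Nat.card H := hcardW
    _ = ℓ ^ Fintype.card Ω * (Nat.card (Abelianization H) * Nat.card (commutator H)) := by
        rw [← hLH]
    _ = ℓ * Nat.card (Abelianization H) *
        (Nat.card (commutator H) * ℓ ^ (Fintype.card Ω - 1)) := by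
        have hpow : ℓ ^ Fintype.card Ω = ℓ ^ (Fintype.card Ω - 1) * ℓ := by
          rw [← pow_succ]; congr 1; omega
        rw [hpow]; ring
end

section
/- In the symmetric group S₆ = Equiv.Perm (Fin 6), consider the subgroups H₁ generated by the permutations (1 2)(3 4) and (1 3)(2 4), and H₂ generated by the permutations (1 2)(3 4) and (1 2)(5 6). Then: (i) for every g ∈ S₆, the cardinality of {h ∈ H₁ : h is conjugate to g in S₆} equals the cardinality of {h ∈ H₂ : h is conjugate to g in S₆} (i.e., H₁ and H₂ are weakly conjugate in S₆); and (ii) there is no σ ∈ S₆ with σ H₁ σ⁻¹ = H₂ (i.e., H₁ and H₂ are not conjugate in S₆). -/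
namespace Stmt17Aux

def pa : Equiv.Perm (Fin 6) := Equiv.swap 0 1 * Equiv.swap 2 3
def pb : Equiv.Perm (Fin 6) := Equiv.swap 0 2 * Equiv.swap 1 3
def pc : Equiv.Perm (Fin 6) := Equiv.swap 0 1 * Equiv.swap 4 5

def K₁ : Subgroup (Equiv.Perm (Fin 6)) where
  carrier := {1, pa, pb, pa * pb}
  one_mem' := Or.inl rfl
  mul_mem' := by
    rintro x y hx hy
    simp only [Set.mem_insert_iff, Set.mem_singleton_iff] at *
    rcases hx with rfl|rfl|rfl|rfl <;> rcases hy with rfl|rfl|rfl|rfl <;> decide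
  inv_mem' := by
    rintro x hx
    simp only [Set.mem_insert_iff, Set.mem_singleton_iff] at *
    rcases hx with rfl|rfl|rfl|rfl <;> decide

def K₂ : Subgroup (Equiv.Perm (Fin 6)) where
  carrier := {1, pa, pc, pa * pc}
  one_mem' := Or.inl rfl
  mul_mem' := by
    rintro x y hx hy
    simp only [Set.mem_insert_iff, Set.mem_singleton_iff] at *
    rcases hx with rfl|rfl|rfl|rfl <;> rcases hy with rfl|rfl|rfl|rfl <;> decide
  inv_mem' := by
    rintro x hx
    simp only [Set.mem_insert_iff, Set.mem_singleton_iff] at *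
    rcases hx with rfl|rfl|rfl|rfl <;> decide

lemma mem_K₁ (w : Equiv.Perm (Fin 6)) : w ∈ K₁ ↔ w = 1 ∨ w = pa ∨ w = pb ∨ w = pa * pb :=
  Iff.rfl

lemma mem_K₂ (w : Equiv.Perm (Fin 6)) : w ∈ K₂ ↔ w = 1 ∨ w = pa ∨ w = pc ∨ w = pa * pc :=
  Iff.rfl

lemma hK₁ : Subgroup.closure
    {Equiv.swap 0 1 * Equiv.swap 2 3, Equiv.swap 0 2 * Equiv.swap 1 3} = K₁ := by
  apply le_antisymm
  · rw [Subgroup.closure_le]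
    rintro x hx
    simp only [Set.mem_insert_iff, Set.mem_singleton_iff] at hx
    rcases hx with rfl|rfl
    · exact Or.inr (Or.inl rfl)
    · exact Or.inr (Or.inr (Or.inl rfl))
  · rintro x hx
    rcases (mem_K₁ x).mp hx with rfl|rfl|rfl|rfl
    · exact one_mem _
    · exact Subgroup.subset_closure (Or.inl rfl)
    · exact Subgroup.subset_closure (Or.inr rfl)
    · exact mul_mem (Subgroup.subset_closure (Or.inl rfl))
        (Subgroup.subset_closure (Or.inr rfl))

lemma hK₂ : Subgroup.closure
    {Equiv.swap 0 1 * Equiv.swap 2 3, Equiv.swap 0 1 * Equiv.swap 4 5} = K₂ := by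
  apply le_antisymm
  · rw [Subgroup.closure_le]
    rintro x hx
    simp only [Set.mem_insert_iff, Set.mem_singleton_iff] at hx
    rcases hx with rfl|rfl
    · exact Or.inr (Or.inl rfl)
    · exact Or.inr (Or.inr (Or.inl rfl))
  · rintro x hx
    rcases (mem_K₂ x).mp hx with rfl|rfl|rfl|rfl
    · exact one_mem _
    · exact Subgroup.subset_closure (Or.inl rfl)
    · exact Subgroup.subset_closure (Or.inr rfl)
    · exact mul_mem (Subgroup.subset_closure (Or.inl rfl))
        (Subgroup.subset_closure (Or.inr rfl))

lemma conj_pb : IsConj pa pb := isConj_iff.mpr ⟨Equiv.swap 1 2, by decide⟩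
lemma conj_pab : IsConj pa (pa * pb) := isConj_iff.mpr ⟨Equiv.swap 1 3, by decide⟩
lemma conj_pc : IsConj pa pc := isConj_iff.mpr ⟨Equiv.swap 2 4 * Equiv.swap 3 5, by decide⟩
lemma conj_pac : IsConj pa (pa * pc) :=
  isConj_iff.mpr ⟨Equiv.swap 0 4 * Equiv.swap 1 5, by decide⟩

lemma count (g x y z : Equiv.Perm (Fin 6)) (hx : IsConj pa x) (hy : IsConj pa y)
    (hz : IsConj pa z) (hx1 : x ≠ 1) (hy1 : y ≠ 1) (hz1 : z ≠ 1)
    (hxy : x ≠ y) (hxz : x ≠ z) (hyz : y ≠ z) :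
    Set.ncard {w : Equiv.Perm (Fin 6) | w ∈ ({1, x, y, z} : Set _) ∧ IsConj w g}
      = if g = 1 then 1 else if IsConj pa g then 3 else 0 := by
  by_cases hg : g = 1
  · subst hg
    have hs : {w : Equiv.Perm (Fin 6) | w ∈ ({1, x, y, z} : Set _) ∧ IsConj w 1}
        = {1} := by
      ext w
      simp only [Set.mem_setOf_eq, Set.mem_insert_iff, Set.mem_singleton_iff,
        isConj_one_left]
      constructor
      · rintro ⟨_, rfl⟩; rfl
      · rintro rfl; exact ⟨Or.inl rfl, rfl⟩
    rw [hs, if_pos rfl, Set.ncard_singleton]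
  · by_cases hc : IsConj pa g
    · have hs : {w : Equiv.Perm (Fin 6) | w ∈ ({1, x, y, z} : Set _) ∧ IsConj w g}
          = {x, y, z} := by
        ext w
        simp only [Set.mem_setOf_eq, Set.mem_insert_iff, Set.mem_singleton_iff]
        constructor
        · rintro ⟨rfl|rfl|rfl|rfl, hw⟩
          · exact absurd (isConj_one_right.mp hw) hg
          · exact Or.inl rfl
          · exact Or.inr (Or.inl rfl)
          · exact Or.inr (Or.inr rfl)
        · rintro (rfl|rfl|rfl)
          · exact ⟨Or.inr (Or.inl rfl), hx.symm.trans hc⟩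
          · exact ⟨Or.inr (Or.inr (Or.inl rfl)), hy.symm.trans hc⟩
          · exact ⟨Or.inr (Or.inr (Or.inr rfl)), hz.symm.trans hc⟩
      rw [hs, if_neg hg, if_pos hc]
      rw [Set.ncard_insert_of_notMem (by simp [hxy, hxz]),
        Set.ncard_pair hyz]
    · have hs : {w : Equiv.Perm (Fin 6) | w ∈ ({1, x, y, z} : Set _) ∧ IsConj w g}
          = (∅ : Set _) := by
        ext w
        simp only [Set.mem_setOf_eq, Set.mem_insert_iff, Set.mem_singleton_iff,
          Set.mem_empty_iff_false, iff_false, not_and]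
        rintro (rfl|rfl|rfl|rfl) hw
        · exact hg (isConj_one_right.mp hw)
        · exact hc (hx.trans hw)
        · exact hc (hy.trans hw)
        · exact hc (hz.trans hw)
      rw [hs, if_neg hg, if_neg hc, Set.ncard_empty]

lemma bridge (K : Subgroup (Equiv.Perm (Fin 6))) (S : Set (Equiv.Perm (Fin 6)))
    (hKS : ∀ w, w ∈ K ↔ w ∈ S) (g : Equiv.Perm (Fin 6)) :
    Nat.card {h : K // IsConj (h : Equiv.Perm (Fin 6)) g}
      = Set.ncard {w : Equiv.Perm (Fin 6) | w ∈ S ∧ IsConj w g} := by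
  rw [← Nat.card_coe_set_eq]
  exact Nat.card_congr
    ((Equiv.subtypeSubtypeEquivSubtypeInter (· ∈ K) (IsConj · g)).trans
      (Equiv.subtypeEquivRight fun w => and_congr_left' (hKS w)))

end Stmt17Aux

open Stmt17Aux in
theorem stmt_17
    (H₁ H₂ : Subgroup (Equiv.Perm (Fin 6)))
    (hH₁ : H₁ = Subgroup.closure
      {Equiv.swap 0 1 * Equiv.swap 2 3, Equiv.swap 0 2 * Equiv.swap 1 3})
    (hH₂ : H₂ = Subgroup.closure
      {Equiv.swap 0 1 * Equiv.swap 2 3, Equiv.swap 0 1 * Equiv.swap 4 5}) :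
    (∀ g : Equiv.Perm (Fin 6),
      Nat.card {h : H₁ // IsConj (h : Equiv.Perm (Fin 6)) g}
        = Nat.card {h : H₂ // IsConj (h : Equiv.Perm (Fin 6)) g}) ∧
      ¬ ∃ σ : Equiv.Perm (Fin 6), H₁.map (MulAut.conj σ).toMonoidHom = H₂ := by
  rw [hK₁] at hH₁
  rw [hK₂] at hH₂
  subst hH₁ hH₂
  constructor
  · intro g
    rw [bridge K₁ {1, pa, pb, pa * pb} mem_K₁ g,
      bridge K₂ {1, pa, pc, pa * pc} mem_K₂ g,
      count g pa pb (pa * pb) (IsConj.refl _) conj_pb conj_pab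
        (by decide) (by decide) (by decide) (by decide) (by decide) (by decide),
      count g pa pc (pa * pc) (IsConj.refl _) conj_pc conj_pac
        (by decide) (by decide) (by decide) (by decide) (by decide) (by decide)]
  · rintro ⟨σ, hσ⟩
    have haK : pa ∈ K₂ := Or.inr (Or.inl rfl)
    have hcK : pc ∈ K₂ := Or.inr (Or.inr (Or.inl rfl))
    rw [← hσ, Subgroup.mem_map] at haK hcK
    obtain ⟨y, hy, hyc⟩ := haK
    obtain ⟨z, hz, hzc⟩ := hcK
    have hy' : σ * y * σ⁻¹ = pa := hyc
    have hz' : σ * z * σ⁻¹ = pc := hzc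
    have hy4 : y 4 = 4 := by
      rcases (mem_K₁ y).mp hy with rfl|rfl|rfl|rfl <;> decide
    have hz4 : z 4 = 4 := by
      rcases (mem_K₁ z).mp hz with rfl|rfl|rfl|rfl <;> decide
    have ha4 : pa (σ 4) = σ 4 := by
      rw [← hy']
      simp [Equiv.Perm.mul_apply, hy4]
    have hc4 : pc (σ 4) = σ 4 := by
      rw [← hz']
      simp [Equiv.Perm.mul_apply, hz4]
    have key : ∀ t : Fin 6, pa t = t → pc t = t → False := by decide
    exact key (σ 4) ha4 hc4
end
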